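/- arXiv:2006.11187 — 6 statements merged into one kernel-verified Lean document; each statement's English description precedes it below -/
import Mathlib

section
/- For integers m ≥ 1 and 0 ≤ l ≤ m - 1, and real r, s > -1, the double product ∏_{i=l+1}^{m-1} ∏_{j=i+1}^{m} (2m - i - j + r + s + 1)(j - i) equals ∏_{i=l+1}^{m} Γ(m - i + 1) · Γ(2m - 2i + r + s + 1) / Γ(m - i + r + s + 1). -/
/-- Ascending factorial: `∏_{k<n} (x+k) = Γ(x+n)/Γ(x)` for `x > 0`. -/
lemma asc_prod_gamma (x : ℝ) (hx : 0 < x) :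
    ∀ n : ℕ, ∏ k ∈ Finset.range n, (x + k) = Real.Gamma (x + n) / Real.Gamma x := by
  intro n
  induction n with
  | zero => simp [div_self (Real.Gamma_pos_of_pos hx).ne']
  | succ n ih =>
      rw [Finset.prod_range_succ, ih]
      have hxn : (0:ℝ) < x + n := by positivity
      have : Real.Gamma (x + (n+1)) = (x + n) * Real.Gamma (x + n) := by
        rw [show x + ((n:ℝ)+1) = (x + n) + 1 by ring, Real.Gamma_add_one hxn.ne']
      push_cast
      rw [this]
      ring

/-- Key inner product identity. -/
lemma inner_prod_gamma (x : ℝ) (hx : -1 < x) (n : ℕ) :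
    ∏ k ∈ Finset.range n, ((2 * (n:ℝ) - (k:ℝ) + x) * ((k:ℝ) + 1)) =
      Real.Gamma ((n:ℝ) + 1) * Real.Gamma (2 * n + x + 1) / Real.Gamma ((n:ℝ) + x + 1) := by
  rw [Finset.prod_mul_distrib]
  have h1 : ∏ k ∈ Finset.range n, ((k:ℝ) + 1) = Real.Gamma ((n:ℝ) + 1) := by
    rw [Real.Gamma_nat_eq_factorial]
    rw [← Finset.prod_range_add_one_eq_factorial]
    push_cast
    rfl
  have h2 : ∏ k ∈ Finset.range n, (2 * (n:ℝ) - (k:ℝ) + x) =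
      Real.Gamma (2 * n + x + 1) / Real.Gamma ((n:ℝ) + x + 1) := by
    rw [← Finset.prod_range_reflect (fun k => 2 * (n:ℝ) - (k:ℝ) + x) n]
    have hcong : ∀ j ∈ Finset.range n,
        (2 * (n:ℝ) - ((n - 1 - j : ℕ) : ℝ) + x) = ((n:ℝ) + x + 1) + j := by
      intro j hj
      have hj' : j < n := Finset.mem_range.mp hj
      have : ((n - 1 - j : ℕ) : ℝ) = (n:ℝ) - 1 - j := by
        have h1 : j ≤ n - 1 := by omega
        have h2 : 1 ≤ n := by omega
        push_cast [Nat.cast_sub h1, Nat.cast_sub h2]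
        ring
      rw [this]; ring
    rw [Finset.prod_congr rfl hcong]
    have hpos : (0:ℝ) < (n:ℝ) + x + 1 := by
      have : (0:ℝ) ≤ (n:ℝ) := Nat.cast_nonneg n
      linarith
    rw [asc_prod_gamma _ hpos n]
    congr 1
    ring
  rw [h1, h2]
  ring

/-- `∏_{i=l+1}^{m-1} ∏_{j=i+1}^{m} (2m-i-j+r+s+1)(j-i)
      = ∏_{i=l+1}^{m} Γ(m-i+1) Γ(2m-2i+r+s+1) / Γ(m-i+r+s+1)`. -/
theorem double_product_gamma (m l : ℕ) (hm : 1 ≤ m) (hl : l ≤ m - 1)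
    (r s : ℝ) (hr : -1 < r) (hs : -1 < s) (hrs : -1 < r + s) :
    (∏ i ∈ Finset.Icc (l + 1) (m - 1), ∏ j ∈ Finset.Icc (i + 1) m,
        ((2 * m - i - j + r + s + 1) * ((j : ℝ) - (i : ℝ)))) =
    ∏ i ∈ Finset.Icc (l + 1) m,
        Real.Gamma ((m : ℝ) - i + 1) * Real.Gamma (2 * m - 2 * i + r + s + 1) /
          Real.Gamma ((m : ℝ) - i + r + s + 1) := by
  obtain ⟨n, rfl⟩ : ∃ n, m = n + 1 := ⟨m - 1, (Nat.succ_pred_eq_of_pos hm).symm⟩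
  have hln : l ≤ n := by omega
  rw [Finset.prod_Icc_succ_top (by omega)]
  have htop : Real.Gamma ((↑(n+1) : ℝ) - ↑(n+1) + 1) *
      Real.Gamma (2 * ↑(n+1) - 2 * ↑(n+1) + r + s + 1) /
      Real.Gamma ((↑(n+1) : ℝ) - ↑(n+1) + r + s + 1) = 1 := by
    have h1 : ((n+1:ℕ) : ℝ) - ((n+1:ℕ) : ℝ) + 1 = 1 := by ring
    have h2 : 2 * ((n+1:ℕ) : ℝ) - 2 * ((n+1:ℕ) : ℝ) + r + s + 1 = r + s + 1 := by ring
    have h3 : ((n+1:ℕ) : ℝ) - ((n+1:ℕ) : ℝ) + r + s + 1 = r + s + 1 := by ring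
    rw [h1, h2, h3, Real.Gamma_one, one_mul,
      div_self (Real.Gamma_pos_of_pos (by linarith)).ne']
  rw [htop, mul_one]
  have hmn : (n + 1 : ℕ) - 1 = n := by omega
  rw [hmn]
  apply Finset.prod_congr rfl
  intro i hi
  obtain ⟨hi1, hi2⟩ := Finset.mem_Icc.mp hi
  obtain ⟨d, rfl⟩ : ∃ d, n = i + d := ⟨n - i, by omega⟩
  -- inner product over Icc (i+1) (i+d+1)
  have hIcc : Finset.Icc (i+1) (i+d+1) = Finset.Ico (i+1) (i+d+2) := rfl
  rw [hIcc, Finset.prod_Ico_eq_prod_range]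
  have hrange : i + d + 2 - (i + 1) = d + 1 := by omega
  rw [hrange]
  have hcong : ∀ k ∈ Finset.range (d+1),
      ((2 * ((i+d+1:ℕ):ℝ) - (i:ℝ) - ((i+1+k:ℕ):ℝ) + r + s + 1) *
        (((i+1+k:ℕ):ℝ) - (i:ℝ))) =
      (2 * ((d+1:ℕ):ℝ) - (k:ℝ) + (r+s)) * ((k:ℝ) + 1) := by
    intro k hk
    push_cast
    ring
  rw [Finset.prod_congr rfl hcong, inner_prod_gamma (r+s) hrs (d+1)]
  have e1 : ((i+d+1:ℕ):ℝ) - (i:ℝ) + 1 = ((d+1:ℕ):ℝ) + 1 := by push_cast; ring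
  have e2 : 2 * ((i+d+1:ℕ):ℝ) - 2 * (i:ℝ) + r + s + 1 = 2 * ((d+1:ℕ):ℝ) + (r+s) + 1 := by
    push_cast; ring
  have e3 : ((i+d+1:ℕ):ℝ) - (i:ℝ) + r + s + 1 = ((d+1:ℕ):ℝ) + (r+s) + 1 := by
    push_cast; ring
  rw [e1, e2, e3]
end

section
/- For integers m ≥ 2, 1 ≤ l ≤ m, and a hook partition τ = (τ₁, 1^{l-1}) with τ₁ ≥ 1 (so τ_i = 1 for 2 ≤ i ≤ l and τ_i = 0 for i > l), setting m_i = τ_i + m - i, the product over pairs 1 ≤ i < j ≤ l(τ) satisfies ∏_{1 ≤ i < j ≤ l} (m_i + m_j + r + s + 1)(m_i - m_j) = ∏_{i=1}^{l} Γ(τ_i + 2m - 2i + r + s + 2) Γ(τ_i + l - i) / (Γ(τ_i + 2m - i - l + r + s + 2) Γ(τ_i)). -/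
lemma gamma_ratio_aux (x : ℝ) (hx : 0 < x) (n : ℕ) :
    Real.Gamma (x + n) = (∏ k ∈ Finset.range n, (x + k)) * Real.Gamma x := by
  induction n with
  | zero => simp
  | succ n ih =>
    have h : x + ((n + 1 : ℕ) : ℝ) = (x + n) + 1 := by push_cast; ring
    have hne : x + (n : ℝ) ≠ 0 := by positivity
    rw [h, Real.Gamma_add_one hne, ih, Finset.prod_range_succ]; ring

/-- For a hook partition `τ = (τ₁, 1^{l-1})` and `m_i = τ_i + m - i`,
`∏_{1≤i<j≤l} (m_i+m_j+r+s+1)(m_i-m_j)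
  = ∏_{i=1}^l Γ(τ_i+2m-2i+r+s+2) Γ(τ_i+l-i) / (Γ(τ_i+2m-i-l+r+s+2) Γ(τ_i))`. -/
theorem hook_pair_product (m l τ₁ : ℕ) (hm : 2 ≤ m) (hl1 : 1 ≤ l) (hlm : l ≤ m)
    (hτ₁ : 1 ≤ τ₁) (r s : ℝ) (hrs : -1 < r + s)
    (τ : ℕ → ℕ) (hτ : ∀ i, τ i = if i = 1 then τ₁ else if i ≤ l then 1 else 0)
    (M : ℕ → ℝ) (hM : ∀ i, M i = (τ i : ℝ) + m - i) :
    (∏ i ∈ Finset.Icc 1 l, ∏ j ∈ Finset.Icc (i + 1) l,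
        ((M i + M j + r + s + 1) * (M i - M j))) =
    ∏ i ∈ Finset.Icc 1 l,
        Real.Gamma ((τ i : ℝ) + 2 * m - 2 * i + r + s + 2) *
          Real.Gamma ((τ i : ℝ) + l - i) /
        (Real.Gamma ((τ i : ℝ) + 2 * m - i - l + r + s + 2) *
          Real.Gamma ((τ i : ℝ))) := by
  refine Finset.prod_congr rfl ?_
  intro i hi
  rw [Finset.mem_Icc] at hi
  obtain ⟨hi1, hil⟩ := hi
  have hτi : 1 ≤ τ i := by rw [hτ]; split_ifs with h1 h2 <;> omega
  have hilR : (i : ℝ) ≤ (l : ℝ) := by exact_mod_cast hil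
  have hlmR : (l : ℝ) ≤ (m : ℝ) := by exact_mod_cast hlm
  have hτiR : (1 : ℝ) ≤ (τ i : ℝ) := by exact_mod_cast hτi
  set n := l - i with hn
  set A : ℝ := (τ i : ℝ) + 2 * m - i - l + r + s + 2 with hA
  set B : ℝ := (τ i : ℝ) with hB
  have hApos : 0 < A := by rw [hA]; linarith
  have hBpos : 0 < B := by rw [hB]; linarith
  have hnc : ((n : ℕ) : ℝ) = (l : ℝ) - i := by
    rw [hn, Nat.cast_sub hil]
  have e1 : (τ i : ℝ) + 2 * m - 2 * i + r + s + 2 = A + n := by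
    rw [hA, hnc]; ring
  have e2 : (τ i : ℝ) + l - i = B + n := by rw [hB, hnc]; ring
  rw [e1, e2, gamma_ratio_aux A hApos n, gamma_ratio_aux B hBpos n]
  have hAne : Real.Gamma A ≠ 0 := (Real.Gamma_pos_of_pos hApos).ne'
  have hBne : Real.Gamma B ≠ 0 := (Real.Gamma_pos_of_pos hBpos).ne'
  have hRHS : (∏ k ∈ Finset.range n, (A + k)) * Real.Gamma A *
      ((∏ k ∈ Finset.range n, (B + k)) * Real.Gamma B) /
      (Real.Gamma A * Real.Gamma B) =
      (∏ k ∈ Finset.range n, (A + k)) * (∏ k ∈ Finset.range n, (B + k)) := by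
    field_simp
  rw [hRHS]
  -- now handle the LHS
  have hLHS : (∏ j ∈ Finset.Icc (i + 1) l, ((M i + M j + r + s + 1) * (M i - M j)))
      = (∏ k ∈ Finset.range n, ((A + ((n - 1 - k : ℕ) : ℝ)) * (B + k))) := by
    rw [← Finset.Ico_add_one_right_eq_Icc, Finset.prod_Ico_eq_prod_range]
    have hcard : l + 1 - (i + 1) = n := by omega
    rw [hcard]
    refine Finset.prod_congr rfl ?_
    intro k hk
    rw [Finset.mem_range] at hk
    have hj2 : i + 1 + k ≠ 1 := by omega
    have hjl : i + 1 + k ≤ l := by omega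
    have hτj : τ (i + 1 + k) = 1 := by rw [hτ]; simp [hj2, hjl]
    have hcast : ((n - 1 - k : ℕ) : ℝ) = (l : ℝ) - i - 1 - k := by
      have h : n - 1 - k = l - (i + 1 + k) := by omega
      rw [h, Nat.cast_sub hjl]; push_cast; ring
    rw [hM i, hM (i + 1 + k), hτj, hA, hB, hcast]
    push_cast
    ring
  rw [hLHS, Finset.prod_mul_distrib]
  congr 1
  exact Finset.prod_range_reflect (fun k => A + (k : ℝ)) n
end

section
/- For integers m ≥ 1, 1 ≤ l ≤ m, reals r, s with r + s > -1, and a hook partition τ = (τ₁, 1^{l-1}) with m_i = τ_i + m - i, the mixed product satisfies ∏_{i=1}^{l} ∏_{j=l+1}^{m} (m_i + m_j + r + s + 1)(m_i - m_j) = ∏_{i=1}^{l} Γ(τ_i + 2m - i - l + r + s + 1) Γ(τ_i + m - i + 1) / (Γ(τ_i + m - i + r + s + 1) Γ(τ_i + l - i + 1)), where m_j = m - j for j > l. -/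
lemma gamma_prod_aux (x : ℝ) (hx : 0 < x) (n : ℕ) :
    ∏ k ∈ Finset.range n, (x + k) = Real.Gamma (x + n) / Real.Gamma x := by
  induction n with
  | zero => simp [div_self (Real.Gamma_pos_of_pos hx).ne']
  | succ n ih =>
    rw [Finset.prod_range_succ, ih]
    have h1 : x + ((n : ℝ) + 1) = (x + n) + 1 := by ring
    have hxn : x + (n : ℝ) ≠ 0 := by positivity
    push_cast
    rw [h1, Real.Gamma_add_one hxn]
    field_simp

/-- For a hook `τ = (τ₁, 1^{l-1})` and `m_i = τ_i + m - i` (so `m_j = m - j` for `j > l`),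
`∏_{i=1}^{l} ∏_{j=l+1}^{m} (m_i+m_j+r+s+1)(m_i-m_j)
 = ∏_{i=1}^{l} Γ(τ_i+2m-i-l+r+s+1) Γ(τ_i+m-i+1) / (Γ(τ_i+m-i+r+s+1) Γ(τ_i+l-i+1))`. -/
theorem hook_mixed_product (m l τ₁ : ℕ) (hm : 1 ≤ m) (hl1 : 1 ≤ l) (hlm : l ≤ m)
    (hτ₁ : 1 ≤ τ₁) (r s : ℝ) (hrs : -1 < r + s)
    (τ : ℕ → ℕ) (hτ : ∀ i, τ i = if i = 1 then τ₁ else if i ≤ l then 1 else 0)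
    (M : ℕ → ℝ) (hM : ∀ i, M i = (τ i : ℝ) + m - i) :
    (∏ i ∈ Finset.Icc 1 l, ∏ j ∈ Finset.Icc (l + 1) m,
        ((M i + M j + r + s + 1) * (M i - M j))) =
    ∏ i ∈ Finset.Icc 1 l,
        Real.Gamma ((τ i : ℝ) + 2 * m - i - l + r + s + 1) *
          Real.Gamma ((τ i : ℝ) + m - i + 1) /
        (Real.Gamma ((τ i : ℝ) + m - i + r + s + 1) *
          Real.Gamma ((τ i : ℝ) + l - i + 1)) := by
  have hrs1 : (0:ℝ) < r + s + 1 := by linarith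
  have hml : ((m - l : ℕ) : ℝ) = (m : ℝ) - l := by
    push_cast [Nat.cast_sub hlm]; ring
  apply Finset.prod_congr rfl
  intro i hi
  simp only [Finset.mem_Icc] at hi
  have hτi : 1 ≤ τ i := by
    obtain ⟨hi1, hi2⟩ := hi
    rw [hτ i]; split_ifs <;> omega
  have hiR : (i : ℝ) ≤ (l : ℝ) := by exact_mod_cast hi.2
  have hlR : (l : ℝ) ≤ (m : ℝ) := by exact_mod_cast hlm
  have hτiR : (1:ℝ) ≤ (τ i : ℝ) := by exact_mod_cast hτi
  set a : ℝ := (τ i : ℝ) + m - i with ha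
  set n : ℕ := m - l with hn
  have key : (∏ j ∈ Finset.Icc (l + 1) m, ((M i + M j + r + s + 1) * (M i - M j)))
      = ∏ k ∈ Finset.range n, ((a + k + r + s + 1) * (a - k)) := by
    apply Finset.prod_nbij' (fun j => m - j) (fun k => m - k)
    · intro j hj; simp only [Finset.mem_Icc] at hj; simp only [Finset.mem_range]; omega
    · intro k hk; simp only [Finset.mem_range] at hk; simp only [Finset.mem_Icc]; omega
    · intro j hj; simp only [Finset.mem_Icc] at hj; omega
    · intro k hk; simp only [Finset.mem_range] at hk; omega
    · intro j hj
      simp only [Finset.mem_Icc] at hj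
      have hτj : τ j = 0 := by rw [hτ j]; split_ifs <;> omega
      have hMj : M j = (m : ℝ) - j := by rw [hM j, hτj]; push_cast; ring
      have hMi : M i = a := by rw [hM i]
      have hjc : ((m - j : ℕ) : ℝ) = (m : ℝ) - j := by
        push_cast [Nat.cast_sub hj.2]; ring
      rw [hMi, hMj, hjc]
      try ring
  rw [key, Finset.prod_mul_distrib]
  have ha0 : 0 < a + r + s + 1 := by simp only [ha]; linarith
  have hb0 : 0 < a - n + 1 := by rw [hml]; simp only [ha]; linarith
  have h1 : ∏ k ∈ Finset.range n, (a + k + r + s + 1)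
      = Real.Gamma ((a + r + s + 1) + n) / Real.Gamma (a + r + s + 1) := by
    rw [← gamma_prod_aux (a + r + s + 1) ha0 n]
    exact Finset.prod_congr rfl fun k _ => by ring
  have h2 : ∏ k ∈ Finset.range n, (a - k)
      = Real.Gamma ((a - n + 1) + n) / Real.Gamma (a - n + 1) := by
    rw [← gamma_prod_aux (a - n + 1) hb0 n, ← Finset.prod_range_reflect]
    apply Finset.prod_congr rfl
    intro k hk
    simp only [Finset.mem_range] at hk
    have hc : ((n - 1 - k : ℕ) : ℝ) = (n : ℝ) - 1 - k := by
      rw [Nat.sub_sub]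
      push_cast [Nat.cast_sub (show 1 + k ≤ n by omega)]
      ring
    rw [hc]; ring
  rw [h1, h2]
  have e1 : a + r + s + 1 + (n : ℝ) = (τ i : ℝ) + 2 * m - i - l + r + s + 1 := by
    rw [hml]; simp only [ha]; try ring
  have e2 : a - (n : ℝ) + 1 + (n : ℝ) = (τ i : ℝ) + m - i + 1 := by
    simp only [ha]; try ring
  have e3 : a + r + s + 1 = (τ i : ℝ) + m - i + r + s + 1 := by
    simp only [ha]; try ring
  have e4 : a - (n : ℝ) + 1 = (τ i : ℝ) + l - i + 1 := by
    rw [hml]; simp only [ha]; try ring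
  rw [e1, e2, e3, e4, div_mul_div_comm]
end

section
/- Let m ≥ 1, r, s > -1, and let τ be a partition of length ≤ m. Define the symmetric Jacobi polynomial P̃_τ^{r,s,m}(x₁,…,x_m) = det(P̃_{τ_i - i + m}^{r,s}(x_j))_{1≤i,j≤m} / V(x₁,…,x_m) where V is the Vandermonde determinant. Then the family (P̃_τ^{r,s,m})_τ is orthogonal with respect to the weight W^{r,s,m}(y) = V(y)² ∏_{i=1}^m y_i^r (1 - y_i)^s on [0,1]^m, and the squared L²-norm of P̃_τ^{r,s,m} equals m! · ∏_{j=1}^m ‖P̃_{τ_j + m - j}^{r,s}‖₂², where ‖·‖₂ is the L²-norm with respect to the one-dimensional weight u^r(1-u)^s on [0,1]. -/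
/-!
Clearing the Vandermonde factors, the integrand becomes
`det (P_{A i} (y j)) * det (P_{B i} (y j)) * ∏ w (y j)` with `A = τ + δ`, `B = σ + δ` for the
staircase `δ = (m-1, …, 1, 0)`, and Andreief's identity turns its integral into
`m! * det ⟨P_{A i}, P_{B j}⟩_w`. The one-variable Jacobi
polynomials are orthogonal for `w u = u^r (1-u)^s`: they are eigenfunctions, with the distinct
eigenvalues `-k (k+r+s+1)`, of the operator `L = u(1-u)∂² + ((r+1) - (r+s+2)u)∂`, which is
symmetric for `w`; on monomials both facts reduce to the recurrence of the moments `∫ uⁿ w`.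
Hence the Gram matrix has a zero row or column unless the strictly decreasing sequences `A` and
`B` coincide, and is diagonal when they do.
-/

open MeasureTheory

/-- The Jacobi polynomial `P̃_k^{r,s}(y) = ((r+1)_k / k!) ₂F₁(-k, k+r+s+1; r+1; y)`. -/
noncomputable def jacobiP (r s : ℝ) (k : ℕ) (y : ℝ) : ℝ :=
  (Polynomial.eval (r + 1) (ascPochhammer ℝ k) / (Nat.factorial k)) *
    ∑ i ∈ Finset.range (k + 1),
      Polynomial.eval (-(k : ℝ)) (ascPochhammer ℝ i) *
        Polynomial.eval ((k : ℝ) + r + s + 1) (ascPochhammer ℝ i) /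
        (Polynomial.eval (r + 1) (ascPochhammer ℝ i) * (Nat.factorial i)) * y ^ i

/-- Vandermonde product `V(x) = ∏_{i<j} (x_i - x_j)`. -/
noncomputable def vandermonde (m : ℕ) (x : Fin m → ℝ) : ℝ :=
  ∏ i, ∏ j ∈ Finset.univ.filter (i < ·), (x i - x j)

/-- The symmetric Jacobi polynomial
`P̃_τ^{r,s,m}(x) = det(P̃_{τ_i - i + m}^{r,s}(x_j))_{i,j} / V(x)`
(indices `i` being `1`-based in the formula, `τ_i - i + m = τ i + (m - 1 - i)`
with `0`-based `i`). -/
noncomputable def symJacobi (r s : ℝ) (m : ℕ) (τ : Fin m → ℕ) (x : Fin m → ℝ) : ℝ :=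
  Matrix.det (Matrix.of fun i j : Fin m => jacobiP r s (τ i + (m - 1 - (i : ℕ))) (x j)) /
    vandermonde m x

/-- The unitary Selberg weight `W^{r,s,m}(y) = V(y)² ∏ y_i^r (1-y_i)^s`. -/
noncomputable def selbergWeight (r s : ℝ) (m : ℕ) (y : Fin m → ℝ) : ℝ :=
  (vandermonde m y) ^ 2 * ∏ i, (y i) ^ r * (1 - y i) ^ s

open Set

noncomputable def jacobiWeight (r s u : ℝ) : ℝ := u ^ r * (1 - u) ^ s

section Weight

variable {r s : ℝ}

lemma intervalIntegrable_jacobiWeight (hr : -1 < r) (hs : -1 < s) :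
    IntervalIntegrable (jacobiWeight r s) volume 0 1 := by
  have left : IntervalIntegrable (jacobiWeight r s) volume 0 (1 / 2) := by
    refine (intervalIntegral.intervalIntegrable_rpow' hr).mul_continuousOn
      (ContinuousOn.rpow_const (by fun_prop) fun u hu => Or.inl ?_)
    rw [uIcc_of_le (by norm_num)] at hu
    linarith [hu.2]
  have right : IntervalIntegrable (jacobiWeight r s) volume (1 / 2) 1 := by
    have h := (intervalIntegral.intervalIntegrable_rpow' (a := 0) (b := 1 / 2) hs).comp_sub_left 1
    norm_num at h
    refine h.symm.continuousOn_mul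
      (ContinuousOn.rpow_const (by fun_prop) fun u hu => Or.inl ?_)
    rw [uIcc_of_le (by norm_num)] at hu
    linarith [hu.1]
  exact left.trans right

lemma integrableOn_mul_jacobiWeight (hr : -1 < r) (hs : -1 < s) {f : ℝ → ℝ}
    (hf : ContinuousOn f (Icc 0 1)) :
    IntegrableOn (fun u => f u * jacobiWeight r s u) (Ioo 0 1) := by
  have hw := (intervalIntegrable_iff_integrableOn_Ioo_of_le zero_le_one).mp
    (intervalIntegrable_jacobiWeight hr hs)
  exact hw.continuousOn_mul_of_subset hf isCompact_Icc measurableSet_Ioo Ioo_subset_Icc_self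

end Weight

noncomputable def jacobiMoment (r s : ℝ) (n : ℕ) : ℝ :=
  ∫ u in Ioo 0 1, u ^ n * jacobiWeight r s u

section Moment

variable {r s : ℝ}

lemma integrableOn_pow_mul_jacobiWeight (hr : -1 < r) (hs : -1 < s) (n : ℕ) :
    IntegrableOn (fun u => u ^ n * jacobiWeight r s u) (Ioo 0 1) :=
  integrableOn_mul_jacobiWeight hr hs (by fun_prop)

lemma hasDerivAt_rpow_mul_one_sub_rpow {u : ℝ} (hu : u ∈ Ioo (0 : ℝ) 1) (n : ℕ) :
    HasDerivAt (fun v => v ^ (r + n + 1) * (1 - v) ^ (s + 1))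
      (((r + n + 1) - (r + s + n + 2) * u) * (u ^ n * jacobiWeight r s u)) u := by
  have h1u : 0 < 1 - u := sub_pos.mpr hu.2
  have hpow := (Real.hasDerivAt_rpow_const (p := r + n + 1) (Or.inl hu.1.ne')).mul
    (((hasDerivAt_id' u).const_sub 1).rpow_const (p := s + 1) (Or.inl h1u.ne'))
  refine hpow.congr_deriv ?_
  simp only [jacobiWeight, add_sub_cancel_right, Real.rpow_add hu.1, Real.rpow_add h1u,
    Real.rpow_natCast, Real.rpow_one]
  ring

lemma jacobiMoment_succ (hr : -1 < r) (hs : -1 < s) (n : ℕ) :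
    (r + s + n + 2) * jacobiMoment r s (n + 1) = (r + n + 1) * jacobiMoment r s n := by
  have hn : (0 : ℝ) ≤ n := n.cast_nonneg
  have hcont : ContinuousOn (fun v : ℝ => v ^ (r + n + 1) * (1 - v) ^ (s + 1)) (Icc 0 1) :=
    (continuousOn_id.rpow_const fun _ _ => Or.inr (by linarith)).mul
      ((continuousOn_const.sub continuousOn_id).rpow_const fun _ _ => Or.inr (by linarith))
  have h0 := (integrableOn_pow_mul_jacobiWeight hr hs n).const_mul (r + n + 1)
  have h1 := (integrableOn_pow_mul_jacobiWeight hr hs (n + 1)).const_mul (r + s + n + 2)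
  have hderiv_eq : ∀ t, (r + n + 1 - (r + s + n + 2) * t) * (t ^ n * jacobiWeight r s t) =
      (r + n + 1) * (t ^ n * jacobiWeight r s t) -
        (r + s + n + 2) * (t ^ (n + 1) * jacobiWeight r s t) := fun t => by ring
  have hFTC := intervalIntegral.integral_eq_sub_of_hasDerivAt_of_le zero_le_one hcont
    (fun u hu => hasDerivAt_rpow_mul_one_sub_rpow hu n)
    ((intervalIntegrable_iff_integrableOn_Ioo_of_le zero_le_one).mpr
      (by simp only [hderiv_eq]; exact h0.sub h1))
  rw [intervalIntegral.integral_of_le zero_le_one, integral_Ioc_eq_integral_Ioo] at hFTC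
  simp only [hderiv_eq, integral_sub h0 h1, integral_const_mul, sub_self,
    Real.zero_rpow (by linarith : r + n + 1 ≠ 0), Real.zero_rpow (by linarith : s + 1 ≠ 0),
    zero_mul, mul_zero] at hFTC
  rw [jacobiMoment, jacobiMoment]
  linarith

/-- `∫ uⁱ · L(uʲ) · w` for the Jacobi operator `L = u(1-u)∂² + ((r+1) - (r+s+2)u)∂`, which
integration by parts turns into the symmetric `-∫ (uⁱ)' (uʲ)' u(1-u) w`. -/
lemma jacobiMoment_pairing (hr : -1 < r) (hs : -1 < s) (i j : ℕ) :
    j * (j + r) * jacobiMoment r s (i + j - 1) - j * (j + r + s + 1) * jacobiMoment r s (i + j) =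
      -(i * j * (jacobiMoment r s (i + j - 1) - jacobiMoment r s (i + j))) := by
  cases j with
  | zero => simp
  | succ j =>
    rw [Nat.add_succ_sub_one, ← add_assoc]
    have hrec := jacobiMoment_succ hr hs (i + j)
    push_cast at hrec ⊢
    linear_combination -(j + 1 : ℝ) * hrec

end Moment

noncomputable def jacobiCoeff (r s : ℝ) (k i : ℕ) : ℝ :=
  (Polynomial.eval (r + 1) (ascPochhammer ℝ k) / k.factorial) *
    (Polynomial.eval (-(k : ℝ)) (ascPochhammer ℝ i) *
      Polynomial.eval ((k : ℝ) + r + s + 1) (ascPochhammer ℝ i) /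
      (Polynomial.eval (r + 1) (ascPochhammer ℝ i) * i.factorial))

section Coeff
variable {r s : ℝ}

lemma jacobiP_eq_sum (r s : ℝ) (k : ℕ) (y : ℝ) :
    jacobiP r s k y = ∑ i ∈ Finset.range (k + 1), jacobiCoeff r s k i * y ^ i := by
  rw [jacobiP, Finset.mul_sum]
  refine Finset.sum_congr rfl fun i _ => ?_
  rw [jacobiCoeff]
  ring

lemma continuous_jacobiP (r s : ℝ) (k : ℕ) : Continuous (jacobiP r s k) := by
  simp only [funext (jacobiP_eq_sum r s k)]
  fun_prop

lemma jacobiCoeff_of_lt (r s : ℝ) {k i : ℕ} (h : k < i) : jacobiCoeff r s k i = 0 := by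
  rw [jacobiCoeff, ascPochhammer_eval_neg_coe_nat_of_lt h]
  ring

lemma jacobiCoeff_succ (hr : -1 < r) (k i : ℕ) :
    (i + 1) * (i + r + 1) * jacobiCoeff r s k (i + 1) =
      (i - k) * (i + k + r + s + 1) * jacobiCoeff r s k i := by
  have hri : r + 1 + i ≠ 0 := by linarith [(i.cast_nonneg : (0 : ℝ) ≤ i)]
  simp only [jacobiCoeff, ascPochhammer_succ_eval, Nat.factorial_succ]
  push_cast
  field_simp
  ring

end Coeff

section Orthogonality
variable {r s : ℝ}

lemma integral_jacobiP_mul_jacobiP (hr : -1 < r) (hs : -1 < s) (a b : ℕ) :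
    ∫ u in Ioo 0 1, jacobiP r s a u * jacobiP r s b u * jacobiWeight r s u =
      ∑ i ∈ Finset.range (a + 1), ∑ j ∈ Finset.range (b + 1),
        jacobiCoeff r s a i * jacobiCoeff r s b j * jacobiMoment r s (i + j) := by
  have hexpand : ∀ u, jacobiP r s a u * jacobiP r s b u * jacobiWeight r s u =
      ∑ i ∈ Finset.range (a + 1), ∑ j ∈ Finset.range (b + 1),
        jacobiCoeff r s a i * jacobiCoeff r s b j * (u ^ (i + j) * jacobiWeight r s u) := by
    intro u
    rw [jacobiP_eq_sum, jacobiP_eq_sum, Finset.sum_mul_sum, Finset.sum_mul]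
    simp only [Finset.sum_mul, pow_add]
    exact Finset.sum_congr rfl fun i _ => Finset.sum_congr rfl fun j _ => by ring
  have hint : ∀ i j, IntegrableOn (fun u => jacobiCoeff r s a i * jacobiCoeff r s b j *
      (u ^ (i + j) * jacobiWeight r s u)) (Ioo 0 1) := fun i j =>
    (integrableOn_pow_mul_jacobiWeight hr hs (i + j)).const_mul _
  simp only [hexpand]
  rw [integral_finsetSum _ fun i _ => integrable_finsetSum _ fun j _ => hint i j]
  refine Finset.sum_congr rfl fun i _ => ?_
  rw [integral_finsetSum _ fun j _ => hint i j]
  simp only [integral_const_mul, jacobiMoment]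

/-- The coefficient form of the eigenvalue equation `L P_b = -b(b+r+s+1) P_b`, paired with `uⁱ`. -/
lemma jacobiCoeff_eigen (hr : -1 < r) (b i : ℕ) :
    b * (b + r + s + 1) *
        ∑ j ∈ Finset.range (b + 1), jacobiCoeff r s b j * jacobiMoment r s (i + j) =
      ∑ j ∈ Finset.range (b + 1), jacobiCoeff r s b j *
        (j * (j + r + s + 1) * jacobiMoment r s (i + j) -
          j * (j + r) * jacobiMoment r s (i + j - 1)) := by
  set f : ℕ → ℝ := fun j => j * (j + r) * jacobiCoeff r s b j * jacobiMoment r s (i + j - 1)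
  have hshift : ∑ j ∈ Finset.range (b + 1), f j =
      ∑ j ∈ Finset.range (b + 1), f (j + 1) := by
    rw [Finset.sum_range_succ', Finset.sum_range_succ _ b]
    simp [f, jacobiCoeff_of_lt r s (Nat.lt_succ_self b)]
  have hterm : ∀ j, f (j + 1) = (j - b) * (j + b + r + s + 1) * jacobiCoeff r s b j *
      jacobiMoment r s (i + j) := fun j => by
    simp only [f, ← jacobiCoeff_succ hr, Nat.add_succ_sub_one]
    push_cast
    ring
  simp only [mul_sub, Finset.sum_sub_distrib, Finset.mul_sum]
  rw [show ∑ j ∈ Finset.range (b + 1), jacobiCoeff r s b j * (j * (j + r) *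
      jacobiMoment r s (i + j - 1)) = ∑ j ∈ Finset.range (b + 1), f j from
    Finset.sum_congr rfl fun j _ => by simp only [f]; ring, hshift]
  simp only [hterm, ← Finset.sum_sub_distrib]
  exact Finset.sum_congr rfl fun j _ => by ring

lemma mul_integral_jacobiP_mul_jacobiP (hr : -1 < r) (hs : -1 < s) (a b : ℕ) :
    b * (b + r + s + 1) *
        ∫ u in Ioo 0 1, jacobiP r s a u * jacobiP r s b u * jacobiWeight r s u =
      ∑ i ∈ Finset.range (a + 1), ∑ j ∈ Finset.range (b + 1),
        jacobiCoeff r s a i * jacobiCoeff r s b j *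
          (i * j * (jacobiMoment r s (i + j - 1) - jacobiMoment r s (i + j))) := by
  rw [integral_jacobiP_mul_jacobiP hr hs, Finset.mul_sum]
  refine Finset.sum_congr rfl fun i _ => ?_
  calc _ = jacobiCoeff r s a i * (b * (b + r + s + 1) * ∑ j ∈ Finset.range (b + 1),
          jacobiCoeff r s b j * jacobiMoment r s (i + j)) := by
        simp only [Finset.mul_sum]
        exact Finset.sum_congr rfl fun j _ => by ring
    _ = _ := by
        rw [jacobiCoeff_eigen hr, Finset.mul_sum]
        refine Finset.sum_congr rfl fun j _ => ?_
        linear_combination -jacobiCoeff r s a i * jacobiCoeff r s b j *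
          jacobiMoment_pairing hr hs i j

theorem integral_jacobiP_mul_jacobiP_eq_zero (hr : -1 < r) (hs : -1 < s) {a b : ℕ}
    (hab : a ≠ b) :
    ∫ u in Ioo 0 1, jacobiP r s a u * jacobiP r s b u * jacobiWeight r s u = 0 := by
  have hcomm : ∫ u in Ioo 0 1, jacobiP r s b u * jacobiP r s a u * jacobiWeight r s u =
      ∫ u in Ioo 0 1, jacobiP r s a u * jacobiP r s b u * jacobiWeight r s u := by
    simp only [mul_comm (jacobiP r s b _)]
  have hb := mul_integral_jacobiP_mul_jacobiP hr hs a b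
  have ha := mul_integral_jacobiP_mul_jacobiP hr hs b a
  rw [hcomm, Finset.sum_comm] at ha
  have hsymm : (a * (a + r + s + 1) - b * (b + r + s + 1)) *
      ∫ u in Ioo 0 1, jacobiP r s a u * jacobiP r s b u * jacobiWeight r s u = 0 := by
    rw [sub_mul, ha, hb]
    simp only [← Finset.sum_sub_distrib]
    refine Finset.sum_eq_zero fun i _ => Finset.sum_eq_zero fun j _ => ?_
    rw [add_comm j i]
    ring
  have hab' : (a : ℝ) - b ≠ 0 := sub_ne_zero.mpr (Nat.cast_injective.ne hab)
  have hpos : (0 : ℝ) < a + b + r + s + 1 := by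
    have : (1 : ℝ) ≤ a + b := by exact_mod_cast Nat.one_le_iff_ne_zero.mpr (by omega)
    linarith
  refine (mul_eq_zero.mp hsymm).resolve_left ?_
  rw [show (a * (a + r + s + 1) - b * (b + r + s + 1) : ℝ) = (a - b) * (a + b + r + s + 1) by ring]
  exact mul_ne_zero hab' hpos.ne'

end Orthogonality

section Andreief

open Equiv

variable {ι : Type*} [Fintype ι] [DecidableEq ι]

lemma Matrix.sum_perm_sum_perm_sign_mul_prod {R : Type*} [CommRing R] (M : Matrix ι ι R) :
    ∑ π : Perm ι, ∑ ρ : Perm ι, ((Perm.sign π : ℤ) : R) * (Perm.sign ρ : ℤ) *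
        ∏ j, M (π j) (ρ j) = ((Fintype.card ι).factorial : R) * M.det := by
  have hcol : ∀ ρ : Perm ι, ∑ π : Perm ι, ((Perm.sign π : ℤ) : R) * ∏ j, M (π j) (ρ j) =
      (Perm.sign ρ : ℤ) * M.det := fun ρ => by
    simpa [Matrix.det_apply'] using Matrix.det_permute' ρ M
  rw [Finset.sum_comm]
  have hterm : ∀ ρ : Perm ι, ∑ π : Perm ι, ((Perm.sign π : ℤ) : R) * (Perm.sign ρ : ℤ) *
      ∏ j, M (π j) (ρ j) = M.det := fun ρ => by
    calc _ = (∑ π : Perm ι, ((Perm.sign π : ℤ) : R) * ∏ j, M (π j) (ρ j)) *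
          (Perm.sign ρ : ℤ) := by
          rw [Finset.sum_mul]
          exact Finset.sum_congr rfl fun π _ => by ring
      _ = M.det := by
          rw [hcol, mul_right_comm, ← Int.cast_mul, ← Units.val_mul, Int.units_mul_self]
          simp
  simp [hterm, Fintype.card_perm]

variable {𝕜 α : Type*} [RCLike 𝕜] [MeasurableSpace α] {μ : Measure α} [SigmaFinite μ]

/-- Andreief's identity. -/
theorem integral_det_mul_det_mul_prod (f g : ι → α → 𝕜) (w : α → 𝕜)
    (hfg : ∀ i j, Integrable (fun x => f i x * g j x * w x) μ) :
    ∫ y, (Matrix.of fun i j => f i (y j)).det * (Matrix.of fun i j => g i (y j)).det *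
        ∏ j, w (y j) ∂(Measure.pi fun _ => μ) =
      ((Fintype.card ι).factorial : 𝕜) *
        (Matrix.of fun i j => ∫ x, f i x * g j x * w x ∂μ).det := by
  have hexpand : ∀ y : ι → α, (Matrix.of fun i j => f i (y j)).det *
      (Matrix.of fun i j => g i (y j)).det * ∏ j, w (y j) =
        ∑ π : Perm ι, ∑ ρ : Perm ι, ((Perm.sign π : ℤ) : 𝕜) * (Perm.sign ρ : ℤ) *
          ∏ j, f (π j) (y j) * g (ρ j) (y j) * w (y j) := fun y => by
    rw [Matrix.det_apply', Matrix.det_apply', Finset.sum_mul_sum, Finset.sum_mul]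
    refine Finset.sum_congr rfl fun π _ => ?_
    rw [Finset.sum_mul]
    refine Finset.sum_congr rfl fun ρ _ => ?_
    simp only [Matrix.of_apply, Finset.prod_mul_distrib]
    ring
  have hint : ∀ π ρ : Perm ι, Integrable (fun y : ι → α => ((Perm.sign π : ℤ) : 𝕜) *
      (Perm.sign ρ : ℤ) * ∏ j, f (π j) (y j) * g (ρ j) (y j) * w (y j))
      (Measure.pi fun _ => μ) := fun π ρ =>
    (Integrable.fintype_prod fun j => hfg (π j) (ρ j)).const_mul _
  simp only [hexpand]
  rw [integral_finsetSum _ fun π _ => integrable_finsetSum _ fun ρ _ => hint π ρ]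
  simp only [integral_finsetSum _ fun ρ _ => hint _ ρ]
  refine (Finset.sum_congr rfl fun π _ => Finset.sum_congr rfl fun ρ _ => ?_).trans
    (Matrix.sum_perm_sum_perm_sign_mul_prod _)
  rw [integral_const_mul, integral_fintype_prod_eq_prod (fun j x => f (π j) x * g (ρ j) x * w x)]
  rfl

end Andreief

section Matrix

variable {n α R : Type*} [Fintype n] [DecidableEq n] [CommRing R] {M : Matrix n n R}

lemma Matrix.det_eq_zero_of_range_ne {A B : n → α} (hM : ∀ i j, A i ≠ B j → M i j = 0)
    (hAB : range A ≠ range B) : M.det = 0 := by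
  by_contra hdet
  refine hAB (Subset.antisymm ?_ ?_)
  · rintro _ ⟨i, rfl⟩
    by_contra hi
    exact hdet (Matrix.det_eq_zero_of_row_eq_zero i fun j => hM i j fun h => hi ⟨j, h.symm⟩)
  · rintro _ ⟨j, rfl⟩
    by_contra hj
    exact hdet (Matrix.det_eq_zero_of_column_eq_zero j fun i => hM i j fun h => hj ⟨i, h⟩)

lemma Matrix.det_eq_prod_diag_of_injective {A : n → α} (hA : Function.Injective A)
    (hM : ∀ i j, A i ≠ A j → M i j = 0) : M.det = ∏ i, M i i := by
  suffices M = Matrix.diagonal fun i => M i i by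
    conv_lhs => rw [this]
    exact Matrix.det_diagonal
  ext i j
  rcases eq_or_ne i j with rfl | hij
  · simp
  · rw [Matrix.diagonal_apply_ne _ hij, hM i j (hA.ne hij)]

end Matrix

lemma det_eq_zero_of_vandermonde_eq_zero {m : ℕ} (f : Fin m → ℝ → ℝ) {y : Fin m → ℝ}
    (hy : vandermonde m y = 0) : (Matrix.of fun i j => f i (y j)).det = 0 := by
  obtain ⟨i, -, hi⟩ := Finset.prod_eq_zero_iff.mp hy
  obtain ⟨j, hj, hij⟩ := Finset.prod_eq_zero_iff.mp hi
  exact Matrix.det_zero_of_column_eq (Finset.mem_filter.mp hj).2.ne fun k => by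
    simp [sub_eq_zero.mp hij]

/-- `τ + δ` for the staircase `δ = (m - 1, …, 1, 0)`, the indices `τ_i - i + m` of the paper. -/
def staircaseShift {m : ℕ} (τ : Fin m → ℕ) (i : Fin m) : ℕ := τ i + (m - 1 - i)

lemma Antitone.strictAnti_staircaseShift {m : ℕ} {τ : Fin m → ℕ} (hτ : Antitone τ) :
    StrictAnti (staircaseShift τ) := fun i j hij => by
  have := hτ hij.le
  have := j.isLt
  have : (i : ℕ) < j := hij
  simp only [staircaseShift]
  omega

lemma staircaseShift_injective {m : ℕ} :
    Function.Injective (staircaseShift : (Fin m → ℕ) → Fin m → ℕ) := fun τ σ h =>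
  funext fun i => by simpa [staircaseShift] using congrFun h i

noncomputable def jacobiGram (r s : ℝ) {n : Type*} (A B : n → ℕ) : Matrix n n ℝ :=
  Matrix.of fun i j =>
    ∫ u in Ioo 0 1, jacobiP r s (A i) u * jacobiP r s (B j) u * jacobiWeight r s u

section Symmetric

variable {r s : ℝ} {m : ℕ}

/-- Holds at every point: where `V(y) = 0` two coordinates coincide and both determinants vanish. -/
lemma symJacobi_mul_symJacobi_mul_selbergWeight (τ σ : Fin m → ℕ) (y : Fin m → ℝ) :
    symJacobi r s m τ y * symJacobi r s m σ y * selbergWeight r s m y =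
      (Matrix.of fun i j => jacobiP r s (staircaseShift τ i) (y j)).det *
        (Matrix.of fun i j => jacobiP r s (staircaseShift σ i) (y j)).det *
          ∏ j, jacobiWeight r s (y j) := by
  rcases eq_or_ne (vandermonde m y) 0 with hV | hV
  · simp [symJacobi, staircaseShift,
      det_eq_zero_of_vandermonde_eq_zero (fun i => jacobiP r s (τ i + (m - 1 - i))) hV]
  · simp only [symJacobi, selbergWeight, jacobiWeight, staircaseShift]
    field_simp

theorem integral_symJacobi_mul_symJacobi_mul_selbergWeight (hr : -1 < r) (hs : -1 < s)
    (τ σ : Fin m → ℕ) :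
    ∫ y : Fin m → ℝ in Set.univ.pi fun _ => Set.Ioo (0 : ℝ) 1,
        symJacobi r s m τ y * symJacobi r s m σ y * selbergWeight r s m y =
      m.factorial * (jacobiGram r s (staircaseShift τ) (staircaseShift σ)).det := by
  simp only [symJacobi_mul_symJacobi_mul_selbergWeight]
  rw [volume_pi, Measure.restrict_pi_pi, integral_det_mul_det_mul_prod _ _ _ fun i j =>
    integrableOn_mul_jacobiWeight hr hs
      ((continuous_jacobiP r s _).mul (continuous_jacobiP r s _)).continuousOn]
  simp [jacobiGram]

end Symmetric

theorem symJacobi_orthogonality_general (m : ℕ) (r s : ℝ) (hr : -1 < r) (hs : -1 < s)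
    (τ σ : Fin m → ℕ) (hτ : Antitone τ) (hσ : Antitone σ) :
    (τ ≠ σ →
      (∫ y : Fin m → ℝ in Set.univ.pi fun _ => Set.Ioo (0 : ℝ) 1,
        symJacobi r s m τ y * symJacobi r s m σ y * selbergWeight r s m y) = 0) ∧
    (∫ y : Fin m → ℝ in Set.univ.pi fun _ => Set.Ioo (0 : ℝ) 1,
        (symJacobi r s m τ y) ^ 2 * selbergWeight r s m y) =
      (Nat.factorial m) *
        ∏ j : Fin m, ∫ u in Set.Ioo (0 : ℝ) 1,
          (jacobiP r s (τ j + (m - 1 - (j : ℕ))) u) ^ 2 * u ^ r * (1 - u) ^ s := by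
  have hgram : ∀ A B : Fin m → ℕ, ∀ i j, A i ≠ B j → jacobiGram r s A B i j = 0 :=
    fun _ _ _ _ => integral_jacobiP_mul_jacobiP_eq_zero hr hs
  refine ⟨fun hne => ?_, ?_⟩
  · rw [integral_symJacobi_mul_symJacobi_mul_selbergWeight hr hs,
      Matrix.det_eq_zero_of_range_ne (hgram _ _), mul_zero]
    rw [Ne, hτ.strictAnti_staircaseShift.range_inj hσ.strictAnti_staircaseShift]
    exact staircaseShift_injective.ne hne
  · simp only [sq (symJacobi r s m τ _)]
    rw [integral_symJacobi_mul_symJacobi_mul_selbergWeight hr hs,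
      Matrix.det_eq_prod_diag_of_injective hτ.strictAnti_staircaseShift.injective (hgram _ _)]
    refine congrArg _ (Finset.prod_congr rfl fun j _ =>
      integral_congr_ae (.of_forall fun u => ?_))
    simp only [jacobiWeight, staircaseShift]
    ring

/-- Orthogonality of symmetric Jacobi polynomials with respect to the unitary Selberg
weight on `[0,1]^m`, and the value of the squared `L²`-norm:
`‖P̃_τ^{r,s,m}‖² = m! ∏_{j=1}^m ‖P̃_{τ_j+m-j}^{r,s}‖₂²`. -/
theorem symJacobi_orthogonality (m : ℕ) (hm : 1 ≤ m) (r s : ℝ) (hr : -1 < r) (hs : -1 < s)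
    (τ σ : Fin m → ℕ) (hτ : Antitone τ) (hσ : Antitone σ) :
    (τ ≠ σ →
      (∫ y : Fin m → ℝ in Set.univ.pi fun _ => Set.Ioo (0 : ℝ) 1,
        symJacobi r s m τ y * symJacobi r s m σ y * selbergWeight r s m y) = 0) ∧
    (∫ y : Fin m → ℝ in Set.univ.pi fun _ => Set.Ioo (0 : ℝ) 1,
        (symJacobi r s m τ y) ^ 2 * selbergWeight r s m y) =
      (Nat.factorial m) *
        ∏ j : Fin m, ∫ u in Set.Ioo (0 : ℝ) 1,
          (jacobiP r s (τ j + (m - 1 - (j : ℕ))) u) ^ 2 * u ^ r * (1 - u) ^ s :=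
  symJacobi_orthogonality_general m r s hr hs τ σ hτ hσ
end

section
/- (Andreief's identity) Let w be a nonnegative integrable function on an interval I and f₁,…,f_m, g₁,…,g_m be functions such that all products f_i g_j w are integrable. Then ∫_{I^m} det(f_i(y_j))_{i,j=1}^m · det(g_i(y_j))_{i,j=1}^m · ∏_{i=1}^m w(y_i) dy₁⋯dy_m = m! · det( ∫_I f_i(y) g_j(y) w(y) dy )_{i,j=1}^m. -/
/-!
Expand `det (g_i(y_j))` over permutations `τ` and multiply the `j`-th column of `(f_i(y_j))` by
`g_{τ j}(y_j)`: the integrand becomes a signed sum of determinants whose `j`-th column depends on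
`y_j` only. By Fubini each such determinant integrates to the determinant of the Gram matrix
`(∫ f_i g_k)` with columns permuted by `τ`, i.e. to `sign τ * det (∫ f_i g_k)`, so each of the
`m!` permutations contributes `det (∫ f_i g_k)`. The weight `w` is absorbed into the `g_i`.
-/

open MeasureTheory Matrix Equiv

namespace Matrix

variable {n R : Type*} [Fintype n] [DecidableEq n] [CommRing R]

theorem det_mul_det_eq_sum_perm (A B : Matrix n n R) :
    A.det * B.det =
      ∑ τ : Perm n, (Perm.sign τ : R) * (of fun i j => A i j * B (τ j) j).det := by
  rw [det_apply' B, Finset.mul_sum]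
  refine Finset.sum_congr rfl fun τ _ => ?_
  simp_rw [mul_comm (A _ _), det_mul_row]
  ring

theorem sum_perm_sign_mul_det_submatrix (M : Matrix n n R) :
    ∑ τ : Perm n, (Perm.sign τ : R) * (M.submatrix id τ).det =
      (Fintype.card n).factorial * M.det := by
  have sign_mul_self (τ : Perm n) : (Perm.sign τ : R) * Perm.sign τ = 1 := by
    rw [← Int.cast_mul, ← Units.val_mul, Int.units_mul_self, Units.val_one, Int.cast_one]
  simp_rw [det_permute', ← mul_assoc, sign_mul_self, one_mul, Finset.sum_const, Finset.card_univ,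
    Fintype.card_perm, nsmul_eq_mul]

end Matrix

section

variable {𝕜 ι : Type*} [RCLike 𝕜] [Fintype ι] [DecidableEq ι] {E : ι → Type*}
  {mE : ∀ i, MeasurableSpace (E i)} {μ : (i : ι) → Measure (E i)} [∀ i, SigmaFinite (μ i)]

theorem integrable_det_of_apply_pi {h : ι → (j : ι) → E j → 𝕜}
    (hh : ∀ i j, Integrable (h i j) (μ j)) :
    Integrable (fun x => (of fun i j => h i j (x j)).det) (Measure.pi μ) := by
  simp only [det_apply', of_apply]
  exact integrable_finsetSum _ fun σ _ =>
    (Integrable.fintype_prod_dep fun j => hh (σ j) j).const_mul _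

theorem integral_det_of_apply_pi {h : ι → (j : ι) → E j → 𝕜}
    (hh : ∀ i j, Integrable (h i j) (μ j)) :
    ∫ x, (of fun i j => h i j (x j)).det ∂Measure.pi μ =
      (of fun i j => ∫ y, h i j y ∂μ j).det := by
  simp only [det_apply', of_apply]
  rw [integral_finsetSum _ fun σ _ =>
    (Integrable.fintype_prod_dep fun j => hh (σ j) j).const_mul _]
  simp_rw [integral_const_mul, integral_fintype_prod_eq_prod]

end

section

variable {𝕜 ι X : Type*} [RCLike 𝕜] [Fintype ι] [DecidableEq ι] [MeasurableSpace X]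
  {μ : Measure X} [SigmaFinite μ]

theorem integral_det_mul_det (f g : ι → X → 𝕜)
    (hfg : ∀ i j, Integrable (fun y => f i y * g j y) μ) :
    ∫ x : ι → X, (of fun i j => f i (x j)).det * (of fun i j => g i (x j)).det
        ∂(Measure.pi fun _ => μ) =
      (Fintype.card ι).factorial * (of fun i j => ∫ y, f i y * g j y ∂μ).det := by
  have hcol (τ : Perm ι) : ∀ i j, Integrable (fun y => f i y * g (τ j) y) μ :=
    fun i j => hfg i (τ j)
  calc _ = ∫ x : ι → X, ∑ τ : Perm ι,
          (Perm.sign τ : 𝕜) * (of fun i j => f i (x j) * g (τ j) (x j)).det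
          ∂(Measure.pi fun _ => μ) := by
        simp_rw [det_mul_det_eq_sum_perm, of_apply]
    _ = ∑ τ : Perm ι, (Perm.sign τ : 𝕜) *
          ((of fun i j => ∫ y, f i y * g j y ∂μ).submatrix id τ).det := by
        rw [integral_finsetSum _ fun τ _ => (integrable_det_of_apply_pi (hcol τ)).const_mul _]
        simp_rw [integral_const_mul, integral_det_of_apply_pi (hcol _)]
        rfl
    _ = _ := sum_perm_sign_mul_det_submatrix _

end

theorem andreief_identity_general (m : ℕ) (I : Set ℝ) (w : ℝ → ℝ) (f g : Fin m → ℝ → ℝ)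
    (hfg : ∀ i j, IntegrableOn (fun y => f i y * g j y * w y) I) :
    (∫ y : Fin m → ℝ in Set.univ.pi fun _ => I,
        Matrix.det (Matrix.of fun i j : Fin m => f i (y j)) *
          Matrix.det (Matrix.of fun i j : Fin m => g i (y j)) * ∏ i, w (y i)) =
      (Nat.factorial m) *
        Matrix.det (Matrix.of fun i j : Fin m => ∫ y in I, f i y * g j y * w y) := by
  have hweight : ∀ y : Fin m → ℝ, (of fun i j => g i (y j)).det * ∏ i, w (y i) =
      (of fun i j => g i (y j) * w (y j)).det := fun y => by
    rw [mul_comm, ← det_mul_row]; simp_rw [of_apply, mul_comm (w _)]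
  simp_rw [mul_assoc _ _ (∏ i, w _), hweight, volume_pi, Measure.restrict_pi_pi]
  simpa only [Fintype.card_fin, mul_assoc] using
    integral_det_mul_det (μ := volume.restrict I) f (fun j y => g j y * w y)
      fun i j => by simpa only [mul_assoc] using (hfg i j).integrable

/-- Andreief's identity:
`∫_{I^m} det(f_i(y_j)) det(g_i(y_j)) ∏ w(y_i) dy = m! det(∫_I f_i g_j w)`. -/
theorem andreief_identity (m : ℕ) (I : Set ℝ) (hI : MeasurableSet I)
    (w : ℝ → ℝ) (hw : ∀ y, 0 ≤ w y) (hwm : Measurable w) (hwi : IntegrableOn w I)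
    (f g : Fin m → ℝ → ℝ) (hfm : ∀ i, Measurable (f i)) (hgm : ∀ i, Measurable (g i))
    (hfg : ∀ i j, IntegrableOn (fun y => f i y * g j y * w y) I) :
    (∫ y : Fin m → ℝ in Set.univ.pi fun _ => I,
        Matrix.det (Matrix.of fun i j : Fin m => f i (y j)) *
          Matrix.det (Matrix.of fun i j : Fin m => g i (y j)) * ∏ i, w (y i)) =
      (Nat.factorial m) *
        Matrix.det (Matrix.of fun i j : Fin m => ∫ y in I, f i y * g j y * w y) :=
  andreief_identity_general m I w f g hfg
end

section
/- Let τ ⊆ α be hook partitions with l(τ) ≥ 1, l(α) ≥ l(τ) + 1, l(α) ≤ m, and write n_i = α_i + m - i, m_j = τ_j + m - j. Then for indices i, j ∈ {l(τ)+1, …, l(α)} one has n_i = m - i + 1 and m_j = m - j, and det( Γ(r + s + 2(m - j) + 2) / ((n_i - m_j)! · Γ(r + s + n_i + m_j + 2)) )_{i,j = l(τ)+1}^{l(α)} = 1/(l(α) - l(τ))! · ∏_{j = l(τ)+1}^{l(α)} 1/(r + s + 2m - l(τ) + 1 - j), with the convention 1/k! = 0 when k < 0. -/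
open Finset Matrix

private lemma gamma_add_nat (x : ℝ) (hx : 0 < x) (n : ℕ) :
    Real.Gamma (x + n) = (∏ t ∈ range n, (x + t)) * Real.Gamma x := by
  induction n with
  | zero => simp
  | succ n ih =>
      have h1 : x + ((n + 1 : ℕ) : ℝ) = (x + n) + 1 := by push_cast; ring
      have h2 : x + (n : ℝ) ≠ 0 := by positivity
      rw [h1, Real.Gamma_add_one h2, ih, prod_range_succ]
      ring

private lemma fin_prod_Iio {N : ℕ} (j : Fin N) (F : ℕ → ℝ) :
    ∏ i ∈ Iio j, F (i : ℕ) = ∏ t ∈ range (j : ℕ), F t := by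
  apply Finset.prod_bij (fun (a : Fin N) (_ : a ∈ Iio j) => (a : ℕ))
  · intro a ha
    exact mem_range.mpr (by exact_mod_cast mem_Iio.mp ha)
  · intro a ha b hb hab
    exact Fin.ext hab
  · intro b hb
    exact ⟨⟨b, lt_trans (mem_range.mp hb) j.isLt⟩,
      mem_Iio.mpr (by simpa [Fin.lt_def] using mem_range.mp hb), rfl⟩
  · intro a ha
    rfl

private lemma col_val (c : ℝ) (j : ℕ) (hj : 2 * (j : ℝ) < c) :
    Real.Gamma (c - 2 * j) / ((Nat.factorial (j + 1)) * Real.Gamma (c - j + 1)) *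
      ∏ i ∈ range j, (((j : ℝ) - i) * (c - i - j - 1)) = 1 / (((j : ℝ) + 1) * (c - j)) := by
  have hx : (0:ℝ) < c - 2 * j := by linarith
  have hG : Real.Gamma (c - 2 * j) ≠ 0 := (Real.Gamma_pos_of_pos hx).ne'
  have hPpos : ∀ t ∈ range j, (0:ℝ) < c - 2 * j + t := fun t _ => by
    have : (0:ℝ) ≤ t := Nat.cast_nonneg t
    linarith
  have hPne : (∏ t ∈ range j, (c - 2 * j + t)) ≠ 0 := ne_of_gt (Finset.prod_pos hPpos)
  have hcj : (0:ℝ) < c - j := by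
    have : (0:ℝ) ≤ j := Nat.cast_nonneg j
    linarith
  have h1 := gamma_add_nat (c - 2 * j) hx (j + 1)
  have e : c - 2 * j + ((j + 1 : ℕ) : ℝ) = c - j + 1 := by push_cast; ring
  rw [e, prod_range_succ] at h1
  have h2 : (∏ i ∈ range j, ((j : ℝ) - i)) = (Nat.factorial j : ℝ) := by
    have e2 : ∏ i ∈ range j, ((j : ℝ) - i)
        = ∏ i ∈ range j, ((fun t : ℕ => (t : ℝ) + 1) (j - 1 - i)) := by
      refine prod_congr rfl fun i hi => ?_
      have hi' : i < j := mem_range.mp hi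
      have : j - 1 - i = j - (i + 1) := by omega
      simp only [this, Nat.cast_sub hi']
      push_cast
      ring
    rw [e2, prod_range_reflect (fun t : ℕ => (t : ℝ) + 1) j, ← prod_range_add_one_eq_factorial]
    push_cast
    rfl
  have h3 : (∏ i ∈ range j, (c - (i:ℝ) - j - 1)) = ∏ t ∈ range j, (c - 2 * j + t) := by
    have e3 : ∏ i ∈ range j, (c - (i:ℝ) - j - 1)
        = ∏ i ∈ range j, ((fun t : ℕ => c - 2 * j + t) (j - 1 - i)) := by
      refine prod_congr rfl fun i hi => ?_
      have hi' : i < j := mem_range.mp hi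
      have : j - 1 - i = j - (i + 1) := by omega
      simp only [this, Nat.cast_sub hi']
      push_cast
      ring
    rw [e3, prod_range_reflect (fun t : ℕ => c - 2 * j + (t:ℝ)) j]
  rw [prod_mul_distrib, h2, h3, h1, Nat.factorial_succ]
  have hjne : ((j:ℝ) + 1) ≠ 0 := by positivity
  have hfj : (Nat.factorial j : ℝ) ≠ 0 := Nat.cast_ne_zero.mpr (Nat.factorial_ne_zero j)
  have hcjj : c - 2 * (j:ℝ) + j ≠ 0 := by
    have : c - 2 * (j:ℝ) + j = c - j := by ring
    rw [this]; exact hcj.ne'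
  push_cast
  field_simp
  ring

private lemma entry_val (c : ℝ) (N : ℕ) (hc : 2 * (N : ℝ) - 2 < c) (i j : ℕ)
    (hi : i < N) (hj : j < N) :
    (if i ≤ j + 1 then
        Real.Gamma (c - 2 * j) /
          ((Nat.factorial (j + 1 - i)) * Real.Gamma (c - i - j + 1))
      else 0)
    = (Real.Gamma (c - 2 * j) / ((Nat.factorial (j + 1)) * Real.Gamma (c - j + 1))) *
      ∏ t ∈ range i, (((j : ℝ) + 1 - t) * (c - j - t)) := by
  have hiN : (i : ℝ) ≤ (N : ℝ) - 1 := by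
    have : (i : ℝ) + 1 ≤ N := by exact_mod_cast hi
    linarith
  have hjN : (j : ℝ) ≤ (N : ℝ) - 1 := by
    have : (j : ℝ) + 1 ≤ N := by exact_mod_cast hj
    linarith
  by_cases h : i ≤ j + 1
  · rw [if_pos h]
    have hx : (0:ℝ) < c - i - j + 1 := by linarith
    have hG : Real.Gamma (c - i - j + 1) ≠ 0 := (Real.Gamma_pos_of_pos hx).ne'
    have h1 := gamma_add_nat (c - i - j + 1) hx i
    have e : c - i - j + 1 + (i : ℝ) = c - j + 1 := by ring
    rw [e] at h1
    have hPpos : ∀ t ∈ range i, (0:ℝ) < c - i - j + 1 + t := fun t _ => by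
      have : (0:ℝ) ≤ t := Nat.cast_nonneg t
      linarith
    have hPne : (∏ t ∈ range i, (c - i - j + 1 + t)) ≠ 0 := ne_of_gt (Finset.prod_pos hPpos)
    have h2 : (∏ t ∈ range i, (c - j - (t:ℝ))) = ∏ t ∈ range i, (c - i - j + 1 + t) := by
      have e2 : ∏ t ∈ range i, (c - j - (t:ℝ))
          = ∏ t ∈ range i, ((fun u : ℕ => c - i - j + 1 + u) (i - 1 - t)) := by
        refine prod_congr rfl fun t ht => ?_
        have ht' : t < i := mem_range.mp ht
        have : i - 1 - t = i - (t + 1) := by omega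
        simp only [this, Nat.cast_sub ht']
        push_cast
        ring
      rw [e2, prod_range_reflect (fun u : ℕ => c - i - j + 1 + (u:ℝ)) i]
    have h3 : (Nat.factorial (j + 1) : ℝ)
        = (Nat.factorial (j + 1 - i) : ℝ) * ∏ t ∈ range i, ((j : ℝ) + 1 - t) := by
      have hn := Nat.factorial_mul_descFactorial h
      have hd : (j + 1).descFactorial i = ∏ t ∈ range i, (j + 1 - t) :=
        Nat.descFactorial_eq_prod_range _ _
      rw [hd] at hn
      have : ((∏ t ∈ range i, (j + 1 - t) : ℕ) : ℝ) = ∏ t ∈ range i, ((j : ℝ) + 1 - t) := by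
        rw [Nat.cast_prod]
        refine prod_congr rfl fun t ht => ?_
        have ht' : t < i := mem_range.mp ht
        have htj : t ≤ j + 1 := by omega
        rw [Nat.cast_sub htj]
        push_cast
        ring
      rw [← this, ← Nat.cast_mul, hn]
    have hQpos : ∀ t ∈ range i, (0:ℝ) < (j:ℝ) + 1 - t := fun t ht => by
      have ht' : t < i := mem_range.mp ht
      have : (t : ℝ) ≤ j := by exact_mod_cast (by omega : t ≤ j)
      linarith
    have hQne : (∏ t ∈ range i, ((j:ℝ) + 1 - t)) ≠ 0 := ne_of_gt (Finset.prod_pos hQpos)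
    have hfne : (Nat.factorial (j + 1 - i) : ℝ) ≠ 0 :=
      Nat.cast_ne_zero.mpr (Nat.factorial_ne_zero _)
    rw [prod_mul_distrib, h2, h3, h1]
    field_simp
  · rw [if_neg h]
    have hmem : j + 1 ∈ range i := mem_range.mpr (by omega)
    rw [prod_eq_zero hmem (by push_cast; ring)]
    ring

private lemma det_hook (N : ℕ) (c : ℝ) (hc : 2 * (N : ℝ) - 2 < c) :
    Matrix.det (Matrix.of fun i j : Fin N =>
      if (i : ℕ) ≤ (j : ℕ) + 1 then
        Real.Gamma (c - 2 * (j : ℕ)) /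
          ((Nat.factorial ((j : ℕ) + 1 - (i : ℕ))) *
            Real.Gamma (c - (i : ℕ) - (j : ℕ) + 1))
      else 0)
    = (1 / (Nat.factorial N : ℝ)) * ∏ j ∈ range N, 1 / (c - j) := by
  classical
  set w : Fin N → ℝ := fun j => ((j : ℝ) + 1) * (c - (j : ℕ)) with hw
  set p : Fin N → Polynomial ℝ := fun i =>
    ∏ t ∈ range (i : ℕ), (Polynomial.X - Polynomial.C ((t : ℝ) * (c + 1) - t ^ 2)) with hp
  set d : Fin N → ℝ := fun j =>
    Real.Gamma (c - 2 * (j : ℕ)) /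
      ((Nat.factorial ((j : ℕ) + 1)) * Real.Gamma (c - (j : ℕ) + 1)) with hd
  have hmonic : ∀ i, (p i).Monic := fun i =>
    Polynomial.monic_prod_of_monic _ _ fun t _ => Polynomial.monic_X_sub_C _
  have hdeg : ∀ i : Fin N, (p i).natDegree = (i : ℕ) := by
    intro i
    rw [hp]
    rw [Polynomial.natDegree_prod _ _ fun t _ => Polynomial.X_sub_C_ne_zero _,
      Finset.sum_congr rfl fun t _ => Polynomial.natDegree_X_sub_C _]
    simp
  have heval : ∀ (i j : Fin N),
      (p i).eval (w j) = ∏ t ∈ range (i : ℕ), (((j : ℝ) + 1 - t) * (c - (j:ℕ) - t)) := by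
    intro i j
    rw [hp]
    simp only [Polynomial.eval_prod, Polynomial.eval_sub, Polynomial.eval_X, Polynomial.eval_C]
    refine prod_congr rfl fun t _ => ?_
    rw [hw]
    ring
  have hmat : (Matrix.of fun i j : Fin N =>
      if (i : ℕ) ≤ (j : ℕ) + 1 then
        Real.Gamma (c - 2 * (j : ℕ)) /
          ((Nat.factorial ((j : ℕ) + 1 - (i : ℕ))) *
            Real.Gamma (c - (i : ℕ) - (j : ℕ) + 1))
      else 0)
      = Matrix.of fun i j : Fin N => d j * (Matrix.of fun i j : Fin N => (p i).eval (w j)) i j := by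
    ext i j
    simp only [Matrix.of_apply]
    rw [entry_val c N hc i j i.isLt j.isLt, heval i j, hd]
  rw [hmat, Matrix.det_mul_row, ← Matrix.det_transpose]
  have htr : (Matrix.of fun i j : Fin N => (p i).eval (w j))ᵀ
      = Matrix.of fun i j : Fin N => (p j).eval (w i) := by
    ext i j
    rfl
  rw [htr, ← Matrix.det_eval_matrixOfPolynomials_eq_det_vandermonde w p hdeg hmonic,
    Matrix.det_vandermonde]
  have hswap : (∏ i : Fin N, ∏ j ∈ Ioi i, (w j - w i))
      = ∏ j : Fin N, ∏ i ∈ Iio j, (w j - w i) :=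
    prod_comm' fun x y => by
      simp only [mem_univ, mem_Ioi, mem_Iio, true_and, and_true]
  rw [hswap, ← prod_mul_distrib]
  have hcol : ∀ j : Fin N, d j * ∏ i ∈ Iio j, (w j - w i)
      = 1 / (((j : ℕ) : ℝ) + 1) * (1 / (c - (j : ℕ))) := by
    intro j
    have hIio : (∏ i ∈ Iio j, (w j - w i))
        = ∏ t ∈ range (j : ℕ), ((((j:ℕ) : ℝ) - t) * (c - t - (j:ℕ) - 1)) := by
      rw [fin_prod_Iio j (fun t => w j - ((t : ℝ) + 1) * (c - t))]
      refine prod_congr rfl fun t _ => ?_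
      rw [hw]
      ring
    rw [hIio, hd]
    have hj2 : 2 * ((j:ℕ) : ℝ) < c := by
      have : ((j:ℕ) : ℝ) + 1 ≤ N := by exact_mod_cast j.isLt
      linarith
    rw [col_val c (j : ℕ) hj2, one_div, mul_inv, ← one_div, ← one_div]
  rw [prod_congr rfl fun j _ => hcol j]
  rw [prod_mul_distrib]
  rw [Fin.prod_univ_eq_prod_range (fun t => 1 / ((t : ℝ) + 1)) N,
    Fin.prod_univ_eq_prod_range (fun t => 1 / (c - (t:ℕ))) N]
  congr 1
  simp only [one_div]
  rw [prod_inv_distrib, ← prod_range_add_one_eq_factorial]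
  push_cast
  rfl

/-- For hooks `τ ⊆ α` with `1 ≤ l(τ) < l(α) ≤ m`, the indices satisfy
`n_i = m - i + 1`, `m_j = m - j` for `l(τ)+1 ≤ i, j ≤ l(α)`, and the determinant
`det(Γ(r+s+2(m-j)+2)/((n_i-m_j)! Γ(r+s+n_i+m_j+2)))_{i,j=l(τ)+1}^{l(α)}`
equals `1/(l(α)-l(τ))! ∏_{j=l(τ)+1}^{l(α)} 1/(r+s+2m-l(τ)+1-j)`
(with the convention `1/k! = 0` for `k < 0`). -/
theorem auxiliary_determinant
    (m la lτ α₁ τ₁ : ℕ) (hlτ : 1 ≤ lτ) (hlτla : lτ + 1 ≤ la) (hlam : la ≤ m)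
    (hτ₁ : 1 ≤ τ₁) (hτα : τ₁ ≤ α₁)
    (r s : ℝ) (hr : -1 < r) (hs : -1 < s)
    (hpos : ∀ j, lτ + 1 ≤ j → j ≤ la → r + s + 2 * m - lτ + 1 - j > 0)
    (α τ : ℕ → ℕ)
    (hα : ∀ i, α i = if i = 1 then α₁ else if i ≤ la then 1 else 0)
    (hτ : ∀ i, τ i = if i = 1 then τ₁ else if i ≤ lτ then 1 else 0)
    (ni mj : ℕ → ℕ) (hni : ∀ i, ni i = α i + (m - i)) (hmj : ∀ j, mj j = τ j + (m - j)) :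
    (∀ i, lτ + 1 ≤ i → i ≤ la → ni i = m - i + 1) ∧
    (∀ j, lτ + 1 ≤ j → j ≤ la → mj j = m - j) ∧
    Matrix.det (Matrix.of fun i j : Fin (la - lτ) =>
      if mj (lτ + 1 + (j : ℕ)) ≤ ni (lτ + 1 + (i : ℕ)) then
        Real.Gamma (r + s + 2 * ((m : ℝ) - (lτ + 1 + (j : ℕ))) + 2) /
          ((Nat.factorial (ni (lτ + 1 + (i : ℕ)) - mj (lτ + 1 + (j : ℕ)))) *
            Real.Gamma (r + s + ni (lτ + 1 + (i : ℕ)) + mj (lτ + 1 + (j : ℕ)) + 2))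
      else 0) =
    (1 / (Nat.factorial (la - lτ))) *
      ∏ j ∈ Finset.Icc (lτ + 1) la, 1 / (r + s + 2 * m - lτ + 1 - j) := by
  have hNi : ∀ i, lτ + 1 ≤ i → i ≤ la → ni i = m - i + 1 := by
    intro i h1 h2
    rw [hni i, hα i, if_neg (by omega), if_pos h2]
    omega
  have hMj : ∀ j, lτ + 1 ≤ j → j ≤ la → mj j = m - j := by
    intro j h1 h2
    rw [hmj j, hτ j, if_neg (by omega), if_neg (by omega)]
    omega
  refine ⟨hNi, hMj, ?_⟩
  set c : ℝ := r + s + 2 * m - 2 * lτ with hc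
  have hcb : 2 * ((la - lτ : ℕ) : ℝ) - 2 < c := by
    have h1 : ((la - lτ : ℕ) : ℝ) ≤ (m : ℝ) - lτ := by
      have h2 : (la - lτ) + lτ ≤ m := by omega
      have h3 := (Nat.cast_le (α := ℝ)).mpr h2
      push_cast at h3
      linarith
    rw [hc]
    linarith
  have hM : (Matrix.of fun i j : Fin (la - lτ) =>
      if mj (lτ + 1 + (j : ℕ)) ≤ ni (lτ + 1 + (i : ℕ)) then
        Real.Gamma (r + s + 2 * ((m : ℝ) - (lτ + 1 + (j : ℕ))) + 2) /
          ((Nat.factorial (ni (lτ + 1 + (i : ℕ)) - mj (lτ + 1 + (j : ℕ)))) *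
            Real.Gamma (r + s + ni (lτ + 1 + (i : ℕ)) + mj (lτ + 1 + (j : ℕ)) + 2))
      else 0)
      = Matrix.of fun i j : Fin (la - lτ) =>
      if (i : ℕ) ≤ (j : ℕ) + 1 then
        Real.Gamma (c - 2 * (j : ℕ)) /
          ((Nat.factorial ((j : ℕ) + 1 - (i : ℕ))) *
            Real.Gamma (c - (i : ℕ) - (j : ℕ) + 1))
      else 0 := by
    ext i j
    simp only [Matrix.of_apply]
    have hia : lτ + 1 + (i : ℕ) ≤ la := by have := i.isLt; omega
    have hja : lτ + 1 + (j : ℕ) ≤ la := by have := j.isLt; omega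
    have him : lτ + 1 + (i : ℕ) ≤ m := le_trans hia hlam
    have hjm : lτ + 1 + (j : ℕ) ≤ m := le_trans hja hlam
    have hni' : ni (lτ + 1 + (i : ℕ)) = m - (lτ + 1 + (i : ℕ)) + 1 := hNi _ (by omega) hia
    have hmj' : mj (lτ + 1 + (j : ℕ)) = m - (lτ + 1 + (j : ℕ)) := hMj _ (by omega) hja
    rw [hni', hmj']
    by_cases hij : (i : ℕ) ≤ (j : ℕ) + 1
    · rw [if_pos (by omega), if_pos hij]
      have hfac : m - (lτ + 1 + (i : ℕ)) + 1 - (m - (lτ + 1 + (j : ℕ))) = (j : ℕ) + 1 - (i : ℕ) := by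
        omega
      rw [hfac]
      congr 2
      · rw [hc]; push_cast; ring
      · rw [hc]
        push_cast [Nat.cast_sub him, Nat.cast_sub hjm]
        ring
    · rw [if_neg (by omega), if_neg hij]
  rw [hM, det_hook (la - lτ) c hcb]
  congr 1
  rw [show Finset.Icc (lτ + 1) la = Finset.Ico (lτ + 1) (la + 1) from (Finset.Ico_add_one_right_eq_Icc _ _).symm]
  rw [Finset.prod_Ico_eq_prod_range]
  rw [show la + 1 - (lτ + 1) = la - lτ from by omega]
  refine prod_congr rfl fun t ht => ?_
  congr 1
  rw [hc]
  push_cast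
  ring
end
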